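/- arXiv:1503.02151 — 12 statements merged into one kernel-verified Lean document; each statement's English description precedes it below -/
import Mathlib

section
/- Let $\{S_n\}_{n\geq 0}$ be a sequence of positive real numbers satisfying the three-term recurrence $a(n)S_{n+1} + b(n)S_n + c(n)S_{n-1} = 0$ for all $n \geq 1$, where $a, b, c$ are real-valued functions of $n$. Suppose there exists an integer $n_0 \geq 0$ such that for every $n > n_0$: (i) $a(n) > 0$, and (ii) either $b(n)^2 < 4a(n)c(n)$, or $S_n / S_{n-1} \geq \big(-b(n) + \sqrt{b(n)^2 - 4a(n)c(n)}\big) / (2a(n))$. Then $S_n^2 \geq S_{n+1} S_{n-1}$ for all $n > n_0$. -/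
/-- Sufficient condition for log-concavity of a positive sequence satisfying a
three-term recurrence `a(n) S_{n+1} + b(n) S_n + c(n) S_{n-1} = 0`. -/
theorem stmt_0 (S : ℕ → ℝ) (hSpos : ∀ n, 0 < S n) (a b c : ℕ → ℝ)
    (hrec : ∀ n : ℕ, 1 ≤ n → a n * S (n + 1) + b n * S n + c n * S (n - 1) = 0)
    (n0 : ℕ)
    (ha : ∀ n : ℕ, n0 < n → 0 < a n)
    (hb : ∀ n : ℕ, n0 < n →
      (b n) ^ 2 < 4 * a n * c n ∨
      S n / S (n - 1) ≥ (-(b n) + Real.sqrt ((b n) ^ 2 - 4 * a n * c n)) / (2 * a n)) :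
    ∀ n : ℕ, n0 < n → S n ^ 2 ≥ S (n + 1) * S (n - 1) := by
  intro n hn
  have hn1 : 1 ≤ n := by omega
  have ha' := ha n hn
  have hx := hSpos n
  have hy := hSpos (n - 1)
  have hz := hSpos (n + 1)
  have hrec' := hrec n hn1
  have key : a n * S n ^ 2 + b n * S n * S (n - 1) + c n * S (n - 1) ^ 2 ≥ 0 := by
    rcases hb n hn with hlt | hge
    · nlinarith [sq_nonneg (2 * a n * S n + b n * S (n - 1)),
        mul_pos (sub_pos.mpr hlt) (mul_pos hy hy)]
    · by_cases hd : (b n) ^ 2 - 4 * a n * c n < 0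
      · nlinarith [sq_nonneg (2 * a n * S n + b n * S (n - 1)), mul_pos hy hy]
      · push_neg at hd
        set s := Real.sqrt ((b n) ^ 2 - 4 * a n * c n) with hs
        have hs2 : s ^ 2 = (b n) ^ 2 - 4 * a n * c n := Real.sq_sqrt hd
        have hs0 : 0 ≤ s := Real.sqrt_nonneg _
        have h1 : (-(b n) + s) * S (n - 1) ≤ S n * (2 * a n) :=
          (div_le_div_iff₀ (by positivity) hy).mp hge
        have t1 : 0 ≤ 2 * a n * S n + b n * S (n - 1) - s * S (n - 1) := by nlinarith
        have t2 : 0 ≤ s * S (n - 1) := mul_nonneg hs0 hy.le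
        nlinarith [mul_nonneg t1 (by linarith : (0:ℝ) ≤ 2 * a n * S n + b n * S (n - 1) + s * S (n - 1))]
  nlinarith [key, hrec', mul_pos hz hy, sq_nonneg (S n)]
end

section
/- Let $\{S_n\}_{n\geq 0}$ be a sequence of positive real numbers satisfying $a(n)S_{n+1} + b(n)S_n + c(n)S_{n-1} = 0$ for all $n \geq 1$, where $a, b, c$ are real-valued functions of $n$. Suppose there exists an integer $n_0 \geq 0$ such that for every $n > n_0$: (i) $a(n) > 0$, and (ii) either $b(n)^2 < 4a(n)c(n)$, or $S_n / S_{n-1} \geq \big(-b(n) + \sqrt{b(n)^2 - 4a(n)c(n)}\big) / (2a(n))$. Then the ratio sequence $r(n) = S_n / S_{n-1}$ is weakly decreasing beyond $n_0$, i.e., $r(n+1) \leq r(n)$ for all $n > n_0$. -/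
/-- Under the same hypotheses as the log-concavity criterion, the ratio sequence
`r(n) = S n / S (n-1)` is weakly decreasing beyond `n0`. -/
theorem stmt_1 (S : ℕ → ℝ) (hSpos : ∀ n, 0 < S n) (a b c : ℕ → ℝ)
    (hrec : ∀ n : ℕ, 1 ≤ n → a n * S (n + 1) + b n * S n + c n * S (n - 1) = 0)
    (n0 : ℕ)
    (ha : ∀ n : ℕ, n0 < n → 0 < a n)
    (hb : ∀ n : ℕ, n0 < n →
      (b n) ^ 2 < 4 * a n * c n ∨
      S n / S (n - 1) ≥ (-(b n) + Real.sqrt ((b n) ^ 2 - 4 * a n * c n)) / (2 * a n)) :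
    ∀ n : ℕ, n0 < n → S (n + 1) / S n ≤ S n / S (n - 1) := by
  intro n hn
  have hn1 : 1 ≤ n := by omega
  have hS0 := hSpos (n - 1)
  have hS1 := hSpos n
  have hS2 := hSpos (n + 1)
  have han := ha n hn
  set r := S n / S (n - 1) with hrdef
  have hrpos : 0 < r := div_pos hS1 hS0
  have key : 0 ≤ a n * r ^ 2 + b n * r + c n := by
    rcases hb n hn with h | h
    · nlinarith [sq_nonneg (2 * a n * r + b n)]
    · rcases le_or_gt ((b n) ^ 2) (4 * a n * c n) with h2 | h2
      · nlinarith [sq_nonneg (2 * a n * r + b n)]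
      · have hD : 0 ≤ (b n) ^ 2 - 4 * a n * c n := by linarith
        have hsq : Real.sqrt ((b n) ^ 2 - 4 * a n * c n) ^ 2
            = (b n) ^ 2 - 4 * a n * c n := Real.sq_sqrt hD
        have hsnn : 0 ≤ Real.sqrt ((b n) ^ 2 - 4 * a n * c n) := Real.sqrt_nonneg _
        have h2a : 0 < 2 * a n := by linarith
        have h3 : -(b n) + Real.sqrt ((b n) ^ 2 - 4 * a n * c n) ≤ 2 * a n * r := by
          have := (div_le_iff₀ h2a).mp h
          linarith [this]
        have h4 : Real.sqrt ((b n) ^ 2 - 4 * a n * c n) ≤ 2 * a n * r + b n := by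
          linarith
        nlinarith [sq_nonneg (2 * a n * r + b n - Real.sqrt ((b n) ^ 2 - 4 * a n * c n))]
  have hrec' := hrec n hn1
  rw [div_le_div_iff₀ hS1 hS0]
  have hr2 : r * S (n - 1) = S n := div_mul_cancel₀ _ (ne_of_gt hS0)
  have hr3 : r ^ 2 * S (n - 1) ^ 2 = S n ^ 2 := by rw [← hr2]; ring
  have key2 : 0 ≤ a n * S n ^ 2 + b n * S n * S (n - 1) + c n * S (n - 1) ^ 2 := by
    have h0 := mul_nonneg key (sq_nonneg (S (n - 1)))
    have heq : (a n * r ^ 2 + b n * r + c n) * S (n - 1) ^ 2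
        = a n * S n ^ 2 + b n * S n * S (n - 1) + c n * S (n - 1) ^ 2 := by
      rw [hrdef]; field_simp
    linarith [heq ▸ h0]
  nlinarith [mul_pos hS1 hS0]
end

section
/- The Fennessey-Larcombe-French sequence $\{V_n\}_{n\geq 0}$ is log-concave for $n \geq 1$; that is, $V_n^2 \geq V_{n-1} V_{n+1}$ for all $n \geq 2$. -/
private lemma nonneg_of_mul_aux (a b : ℚ) (ha : 0 < a) (h : 0 ≤ a * b) : 0 ≤ b := by
  by_contra hb
  push_neg at hb
  nlinarith [mul_pos ha (neg_pos.mpr hb)]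

private lemma flf_aux (V : ℕ → ℚ) (hV0 : V 0 = 1) (hV1 : V 1 = 8)
    (hrec : ∀ n : ℕ, 1 ≤ n →
      (n : ℚ) * (n + 1) ^ 2 * V (n + 1) =
        8 * n * (3 * n ^ 2 + 5 * n + 1) * V n
          - 128 * ((n : ℚ) - 1) * (n + 1) ^ 2 * V (n - 1)) :
    ∀ n : ℕ, 2 ≤ n → 0 < V (n - 1) ∧ 0 < V n ∧
      (n : ℚ) ^ 3 * V n ≥ 16 * ((n : ℚ) ^ 3 + 1) * V (n - 1) := by
  intro n hn
  induction n, hn using Nat.le_induction with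
  | base =>
      have h1 := hrec 1 (by norm_num)
      simp only [Nat.cast_one] at h1
      norm_num [hV0, hV1] at h1
      refine ⟨by norm_num [hV1], by linarith, ?_⟩
      norm_num [hV1]; linarith
  | succ n hn ih =>
      obtain ⟨hW, hX, hD⟩ := ih
      set W := V (n - 1) with hWdef
      set X := V n with hXdef
      have hrecn := hrec n (by omega)
      set N : ℚ := (n : ℚ) with hNdef
      have hN2 : (2 : ℚ) ≤ N := by rw [hNdef]; exact_mod_cast hn
      have hNpos : 0 < N := by linarith
      have hDn : 0 ≤ N ^ 3 * X - 16 * (N ^ 3 + 1) * W := by linarith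
      -- key identity for the next difference
      have key : N ^ 4 * (N + 1) ^ 2 *
          ((N + 1) ^ 3 * V (n + 1) - 16 * ((N + 1) ^ 3 + 1) * X) =
          (N + 1) ^ 2 * (8 * N * (N - 1) * (N ^ 2 + 3 * N + 3) *
              (N ^ 3 * X - 16 * (N ^ 3 + 1) * W)
            + 384 * N * (N - 1) * (N + 1) * W) := by
        linear_combination (N ^ 3 * (N + 1) ^ 3) * hrecn
      have hc1 : 0 ≤ 8 * N * (N - 1) * (N ^ 2 + 3 * N + 3) := by nlinarith
      have hc2 : 0 ≤ 384 * N * (N - 1) * (N + 1) := by nlinarith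
      have hrhs : 0 ≤ (N + 1) ^ 2 * (8 * N * (N - 1) * (N ^ 2 + 3 * N + 3) *
              (N ^ 3 * X - 16 * (N ^ 3 + 1) * W)
            + 384 * N * (N - 1) * (N + 1) * W) := by
        have := mul_nonneg hc1 hDn
        have := mul_nonneg hc2 hW.le
        positivity
      have hpos4 : 0 < N ^ 4 * (N + 1) ^ 2 := by positivity
      have hD' : 0 ≤ (N + 1) ^ 3 * V (n + 1) - 16 * ((N + 1) ^ 3 + 1) * X := by
        refine nonneg_of_mul_aux _ _ hpos4 ?_
        rw [key]; exact hrhs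
      have hXnext : 0 < V (n + 1) := by nlinarith
      have hcast : ((n + 1 : ℕ) : ℚ) = N + 1 := by push_cast [hNdef]; ring
      have hidx : n + 1 - 1 = n := rfl
      refine ⟨?_, hXnext, ?_⟩
      · rw [hidx]; exact hX
      · rw [hidx, hcast]; linarith

/-- The Fennessey-Larcombe-French sequence is log-concave for `n ≥ 1`:
`V_n^2 ≥ V_{n-1} V_{n+1}` for all `n ≥ 2`. -/
theorem stmt_2 (V : ℕ → ℚ) (hV0 : V 0 = 1) (hV1 : V 1 = 8)
    (hrec : ∀ n : ℕ, 1 ≤ n →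
      (n : ℚ) * (n + 1) ^ 2 * V (n + 1) =
        8 * n * (3 * n ^ 2 + 5 * n + 1) * V n
          - 128 * ((n : ℚ) - 1) * (n + 1) ^ 2 * V (n - 1)) :
    ∀ n : ℕ, 2 ≤ n → V n ^ 2 ≥ V (n - 1) * V (n + 1) := by
  intro n hn
  obtain ⟨hW, hX, hD⟩ := flf_aux V hV0 hV1 hrec n hn
  set W := V (n - 1)
  set X := V n
  set N : ℚ := (n : ℚ) with hNdef
  have hN2 : (2 : ℚ) ≤ N := by rw [hNdef]; exact_mod_cast hn
  have hNpos : 0 < N := by linarith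
  have hrecn := hrec n (by omega)
  have hDn : 0 ≤ N ^ 3 * X - 16 * (N ^ 3 + 1) * W := by linarith
  have key : N ^ 7 * (N + 1) ^ 2 * (X ^ 2 - W * V (n + 1)) =
      N * (N + 1) ^ 2 * (N ^ 3 * X - 16 * (N ^ 3 + 1) * W) ^ 2
      + 8 * N * (N ^ 5 + 3 * N ^ 4 + 3 * N ^ 3 + 4 * N ^ 2 + 8 * N + 4) *
          (N ^ 3 * X - 16 * (N ^ 3 + 1) * W) * W
      + 128 * N * (3 * N ^ 4 + 3 * N ^ 3 + 2 * N ^ 2 + 4 * N + 2) * W ^ 2 := by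
    linear_combination (-(N ^ 6) * W) * hrecn
  have hc1 : 0 ≤ 8 * N * (N ^ 5 + 3 * N ^ 4 + 3 * N ^ 3 + 4 * N ^ 2 + 8 * N + 4) := by
    positivity
  have hrhs : 0 ≤ N ^ 7 * (N + 1) ^ 2 * (X ^ 2 - W * V (n + 1)) := by
    rw [key]
    have h1 : 0 ≤ N * (N + 1) ^ 2 * (N ^ 3 * X - 16 * (N ^ 3 + 1) * W) ^ 2 := by positivity
    have h2 := mul_nonneg (mul_nonneg hc1 hDn) hW.le
    have h3 : 0 ≤ 128 * N * (3 * N ^ 4 + 3 * N ^ 3 + 2 * N ^ 2 + 4 * N + 2) * W ^ 2 := by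
      positivity
    linarith
  have hpos : 0 < N ^ 7 * (N + 1) ^ 2 := by positivity
  have := nonneg_of_mul_aux _ _ hpos hrhs
  linarith
end

section
/- Every term of the Fennessey-Larcombe-French sequence is positive: $V_n > 0$ for all $n \geq 0$. -/
/-- Every term of the Fennessey-Larcombe-French sequence is positive. -/
theorem stmt_3 (V : ℕ → ℚ) (hV0 : V 0 = 1) (hV1 : V 1 = 8)
    (hrec : ∀ n : ℕ, 1 ≤ n →
      (n : ℚ) * (n + 1) ^ 2 * V (n + 1) =
        8 * n * (3 * n ^ 2 + 5 * n + 1) * V n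
          - 128 * ((n : ℚ) - 1) * (n + 1) ^ 2 * V (n - 1)) :
    ∀ n : ℕ, 0 < V n := by
  have key : ∀ n : ℕ, 0 < V n ∧ 8 * V n ≤ V (n + 1) := by
    intro n
    induction n with
    | zero => refine ⟨by simp [hV0], by simp [hV0, hV1]⟩
    | succ n ih =>
      obtain ⟨h1, h2⟩ := ih
      have h3 : 0 < V (n + 1) := lt_of_lt_of_le (by positivity) h2
      refine ⟨h3, ?_⟩
      have hr := hrec (n + 1) (by omega)
      have hsub : n + 1 - 1 = n := rfl
      rw [hsub] at hr
      push_cast at hr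
      have hn : (0 : ℚ) ≤ (n : ℚ) := Nat.cast_nonneg n
      nlinarith [mul_nonneg (mul_nonneg hn (mul_nonneg hn hn)) (sub_nonneg.2 h2),
        mul_nonneg (mul_nonneg hn hn) (sub_nonneg.2 h2),
        mul_nonneg hn (sub_nonneg.2 h2), sub_nonneg.2 h2,
        mul_nonneg (mul_nonneg hn (mul_nonneg hn hn)) h3.le,
        mul_nonneg (mul_nonneg hn hn) h3.le,
        mul_nonneg hn h3.le, h3.le, h1.le]
  exact fun n => (key n).1
end

section
/- The ratio sequence of the Fennessey-Larcombe-French sequence is weakly decreasing from index $2$ onward: $V_{n+1}/V_n \leq V_n/V_{n-1}$ for all $n \geq 2$. -/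
set_option maxHeartbeats 1000000


/-- The ratio sequence of the Fennessey-Larcombe-French sequence is weakly
decreasing from index 2 on: `V_{n+1}/V_n ≤ V_n/V_{n-1}` for all `n ≥ 2`. -/
theorem stmt_4 (V : ℕ → ℚ) (hV0 : V 0 = 1) (hV1 : V 1 = 8)
    (hrec : ∀ n : ℕ, 1 ≤ n →
      (n : ℚ) * (n + 1) ^ 2 * V (n + 1) =
        8 * n * (3 * n ^ 2 + 5 * n + 1) * V n
          - 128 * ((n : ℚ) - 1) * (n + 1) ^ 2 * V (n - 1)) :
    ∀ n : ℕ, 2 ≤ n → V (n + 1) / V n ≤ V n / V (n - 1) := by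
  -- compute V 2 and V 3
  have h1 := hrec 1 le_rfl
  norm_num at h1
  have hV2 : V 2 = 144 := by linarith
  have h2 := hrec 2 (by norm_num)
  norm_num [hV1, hV2] at h2
  have hV3 : V 3 = 2432 := by linarith
  -- key lemma: for m ≥ 2, V m > 0 and V(m+1)/V m ≥ 16 + 16/(m(m+1)^2)
  have main : ∀ m : ℕ, 2 ≤ m → 0 < V m ∧
      (16 * (m : ℚ) * ((m : ℚ) + 1) ^ 2 + 16) * V m ≤ (m : ℚ) * ((m : ℚ) + 1) ^ 2 * V (m + 1) := by
    intro m hm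
    induction m, hm using Nat.le_induction with
    | base =>
      rw [hV2, hV3]
      norm_num
    | succ m hm ih =>
      obtain ⟨hVm, hI⟩ := ih
      have hq : (2 : ℚ) ≤ (m : ℚ) := by exact_mod_cast hm
      set q : ℚ := (m : ℚ) with hqdef
      have hK2 : (0 : ℚ) < q * (q + 1) ^ 2 := by positivity
      have hVm1 : 0 < V (m + 1) := by nlinarith [hI, mul_pos hK2 hVm]
      have hrecm := hrec (m + 1) (by omega)
      push_cast at hrecm
      have hs : (0 : ℚ) ≤ q * (q + 1) ^ 2 * V (m + 1) - (16 * q * (q + 1) ^ 2 + 16) * V m := by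
        linarith
      have key : (q * (q + 1) ^ 2) *
          ((q + 1) * ((q + 1) + 1) ^ 2 * V (m + 2)
            - (16 * (q + 1) * ((q + 1) + 1) ^ 2 + 16) * V (m + 1)) =
          (8 * q ^ 3 + 32 * q ^ 2 + 32 * q - 8) *
            (q * (q + 1) ^ 2 * V (m + 1) - (16 * q * (q + 1) ^ 2 + 16) * V m)
          + (256 * q ^ 2 + 384 * q - 128) * V m := by
        linear_combination (q * (q + 1) ^ 2) * hrecm
      have hD : (0 : ℚ) ≤ 8 * q ^ 3 + 32 * q ^ 2 + 32 * q - 8 := by nlinarith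
      have hst : (0 : ℚ) ≤ 256 * q ^ 2 + 384 * q - 128 := by nlinarith
      have h4 : (0 : ℚ) ≤ (8 * q ^ 3 + 32 * q ^ 2 + 32 * q - 8) *
            (q * (q + 1) ^ 2 * V (m + 1) - (16 * q * (q + 1) ^ 2 + 16) * V m)
          + (256 * q ^ 2 + 384 * q - 128) * V m :=
        add_nonneg (mul_nonneg hD hs) (mul_nonneg hst hVm.le)
      have h5 : (0 : ℚ) ≤ (q + 1) * ((q + 1) + 1) ^ 2 * V (m + 2)
            - (16 * (q + 1) * ((q + 1) + 1) ^ 2 + 16) * V (m + 1) := by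
        nlinarith [key, h4, hK2]
      refine ⟨hVm1, ?_⟩
      push_cast
      linarith
  intro n hn
  rcases eq_or_lt_of_le hn with heq | hlt
  · -- n = 2
    subst heq
    rw [show (2 : ℕ) - 1 = 1 from rfl, hV1, hV2, hV3]
    norm_num
  · -- n ≥ 3
    obtain ⟨m, rfl⟩ : ∃ m, n = m + 1 := ⟨n - 1, by omega⟩
    have hm : 2 ≤ m := by omega
    obtain ⟨hVm, hI⟩ := main m hm
    have hq : (2 : ℚ) ≤ (m : ℚ) := by exact_mod_cast hm
    set q : ℚ := (m : ℚ) with hqdef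
    have hK2 : (0 : ℚ) < q * (q + 1) ^ 2 := by positivity
    have hVm1 : 0 < V (m + 1) := by nlinarith [hI, mul_pos hK2 hVm]
    rw [Nat.add_sub_cancel, div_le_div_iff₀ hVm1 hVm]
    have hrecm := hrec (m + 1) (by omega)
    push_cast at hrecm
    have hs : (0 : ℚ) ≤ q * (q + 1) ^ 2 * V (m + 1) - (16 * q * (q + 1) ^ 2 + 16) * V m := by
      linarith
    have hq0 : (0 : ℚ) ≤ q := by linarith
    have hc1 : (0 : ℚ) ≤ 8 * q ^ 6 + 64 * q ^ 5 + 200 * q ^ 4 + 328 * q ^ 3 + 368 * q ^ 2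
        + 312 * q + 128 := by positivity
    have hc0 : (0 : ℚ) ≤ 512 * q ^ 5 + 2432 * q ^ 4 + 4480 * q ^ 3 + 4480 * q ^ 2
        + 2944 * q + 1024 := by positivity
    have hA : (0 : ℚ) < (q + 1) * (q + 2) ^ 2 := by positivity
    have key : (q * (q + 1) ^ 2) ^ 2 *
        ((q + 1) * (q + 2) ^ 2 * V (m + 1) ^ 2
          - 8 * (q + 1) * (3 * (q + 1) ^ 2 + 5 * (q + 1) + 1) * V (m + 1) * V m
          + 128 * q * (q + 2) ^ 2 * V m ^ 2) =
        (q + 1) * (q + 2) ^ 2 *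
            (q * (q + 1) ^ 2 * V (m + 1) - (16 * q * (q + 1) ^ 2 + 16) * V m) ^ 2
          + (8 * q ^ 6 + 64 * q ^ 5 + 200 * q ^ 4 + 328 * q ^ 3 + 368 * q ^ 2 + 312 * q + 128) *
            (q * (q + 1) ^ 2 * V (m + 1) - (16 * q * (q + 1) ^ 2 + 16) * V m) * V m
          + (512 * q ^ 5 + 2432 * q ^ 4 + 4480 * q ^ 3 + 4480 * q ^ 2 + 2944 * q + 1024) *
            V m ^ 2 := by
      ring
    have hrhs : (0 : ℚ) ≤ (q + 1) * (q + 2) ^ 2 *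
            (q * (q + 1) ^ 2 * V (m + 1) - (16 * q * (q + 1) ^ 2 + 16) * V m) ^ 2
          + (8 * q ^ 6 + 64 * q ^ 5 + 200 * q ^ 4 + 328 * q ^ 3 + 368 * q ^ 2 + 312 * q + 128) *
            (q * (q + 1) ^ 2 * V (m + 1) - (16 * q * (q + 1) ^ 2 + 16) * V m) * V m
          + (512 * q ^ 5 + 2432 * q ^ 4 + 4480 * q ^ 3 + 4480 * q ^ 2 + 2944 * q + 1024) *
            V m ^ 2 :=
      add_nonneg (add_nonneg (mul_nonneg hA.le (sq_nonneg _))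
        (mul_nonneg (mul_nonneg hc1 hs) hVm.le)) (mul_nonneg hc0 (sq_nonneg _))
    have hK2sq : (0 : ℚ) < (q * (q + 1) ^ 2) ^ 2 := by positivity
    have hQ : (0 : ℚ) ≤ (q + 1) * (q + 2) ^ 2 * V (m + 1) ^ 2
          - 8 * (q + 1) * (3 * (q + 1) ^ 2 + 5 * (q + 1) + 1) * V (m + 1) * V m
          + 128 * q * (q + 2) ^ 2 * V m ^ 2 := by
      have h6 : (0 : ℚ) ≤ (q * (q + 1) ^ 2) ^ 2 *
          ((q + 1) * (q + 2) ^ 2 * V (m + 1) ^ 2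
            - 8 * (q + 1) * (3 * (q + 1) ^ 2 + 5 * (q + 1) + 1) * V (m + 1) * V m
            + 128 * q * (q + 2) ^ 2 * V m ^ 2) := by
        rw [key]; exact hrhs
      exact (mul_nonneg_iff_of_pos_left hK2sq).mp h6
    have h7 : ((q + 1) * ((q + 1) + 1) ^ 2 * V (m + 1 + 1)) * V m =
        (8 * (q + 1) * (3 * (q + 1) ^ 2 + 5 * (q + 1) + 1) * V (m + 1)
          - 128 * ((q + 1) - 1) * ((q + 1) + 1) ^ 2 * V m) * V m := by
      rw [hrecm]
    have h8 : (q + 1) * (q + 2) ^ 2 * (V (m + 1 + 1) * V m) ≤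
        (q + 1) * (q + 2) ^ 2 * (V (m + 1) * V (m + 1)) := by linarith [h7, hQ]
    exact le_of_mul_le_mul_left h8 hA
end

section
/- For every integer $n \geq 3$, the Fennessey-Larcombe-French sequence satisfies $(n^3 - n^2)\, V_n \geq 16(n^3 - n^2 + 1)\, V_{n-1}$; equivalently, $V_n / V_{n-1} \geq 16(n^3 - n^2 + 1)/(n^3 - n^2)$. -/
/-- For every integer `n ≥ 3`, the Fennessey-Larcombe-French sequence satisfies
`(n³ - n²) V_n ≥ 16 (n³ - n² + 1) V_{n-1}`. -/
theorem stmt_5 (V : ℕ → ℚ) (hV0 : V 0 = 1) (hV1 : V 1 = 8)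
    (hrec : ∀ n : ℕ, 1 ≤ n →
      (n : ℚ) * (n + 1) ^ 2 * V (n + 1) =
        8 * n * (3 * n ^ 2 + 5 * n + 1) * V n
          - 128 * ((n : ℚ) - 1) * (n + 1) ^ 2 * V (n - 1)) :
    ∀ n : ℕ, 3 ≤ n →
      ((n : ℚ) ^ 3 - (n : ℚ) ^ 2) * V n ≥ 16 * ((n : ℚ) ^ 3 - (n : ℚ) ^ 2 + 1) * V (n - 1) := by
  have h2 : V 2 = 144 := by
    have h := hrec 1 le_rfl
    norm_num [hV0, hV1] at h
    linarith
  have h3 : V 3 = 2432 := by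
    have h := hrec 2 (by norm_num)
    norm_num [hV1, h2] at h
    linarith
  have key : ∀ n : ℕ, 3 ≤ n → 0 < V (n - 1) ∧
      ((n : ℚ) ^ 3 - (n : ℚ) ^ 2) * V n ≥ 16 * ((n : ℚ) ^ 3 - (n : ℚ) ^ 2 + 1) * V (n - 1) := by
    intro n hn
    induction n, hn using Nat.le_induction with
    | base => norm_num [h2, h3]
    | succ n hn ih =>
      obtain ⟨hpos, hineq⟩ := ih
      have hn1 : (1:ℕ) ≤ n := by omega
      have hE := hrec n hn1
      have hnq : (3:ℚ) ≤ (n:ℚ) := by exact_mod_cast hn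
      have hsub : (n:ℕ) + 1 - 1 = n := rfl
      have hc : (0:ℚ) < (n:ℚ)^3 - (n:ℚ)^2 := by nlinarith
      have hVn : 0 < V n := by
        have h16 : (0:ℚ) < 16 * ((n:ℚ)^3 - (n:ℚ)^2 + 1) * V (n-1) :=
          mul_pos (by nlinarith) hpos
        by_contra h
        push_neg at h
        nlinarith [mul_nonneg hc.le (neg_nonneg.mpr h)]
      refine ⟨hVn, ?_⟩
      rw [hsub]
      push_cast
      nlinarith [hE, hineq, hVn, hpos, mul_pos hVn hpos, sq_nonneg ((n:ℚ)-3),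
        mul_nonneg (mul_nonneg hVn.le (show (0:ℚ) ≤ (n:ℚ) - 3 by linarith)) (show (0:ℚ) ≤ (n:ℚ) by linarith),
        mul_le_mul_of_nonneg_left hineq (show (0:ℚ) ≤ 8 * ((n:ℚ)-1) * ((n:ℚ)+1)^2 by nlinarith)]
  intro n hn
  exact (key n hn).2
end

section
/- For every integer $n > 3$, the real-number inequality $\dfrac{16(n^3 - n^2 + 1)}{n^3 - n^2} \geq \dfrac{8n(3n^2+5n+1) + \sqrt{64(n^6 + 6n^5 + 15n^4 + 26n^3 + 25n^2 + 8n)}}{2n(n+1)^2}$ holds. -/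
/-- For every integer `n > 3`, the real inequality
`16(n³-n²+1)/(n³-n²) ≥ (8n(3n²+5n+1) + √(64(n⁶+6n⁵+15n⁴+26n³+25n²+8n)))/(2n(n+1)²)` holds. -/
theorem stmt_6 :
    ∀ n : ℤ, 3 < n →
      16 * ((n : ℝ) ^ 3 - (n : ℝ) ^ 2 + 1) / ((n : ℝ) ^ 3 - (n : ℝ) ^ 2) ≥
        (8 * (n : ℝ) * (3 * (n : ℝ) ^ 2 + 5 * (n : ℝ) + 1) +
            Real.sqrt (64 * ((n : ℝ) ^ 6 + 6 * (n : ℝ) ^ 5 + 15 * (n : ℝ) ^ 4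
              + 26 * (n : ℝ) ^ 3 + 25 * (n : ℝ) ^ 2 + 8 * (n : ℝ)))) /
          (2 * (n : ℝ) * ((n : ℝ) + 1) ^ 2) := by
  intro n hn
  have hn4 : (4 : ℤ) ≤ n := hn
  have hx : (4 : ℝ) ≤ (n : ℝ) := by exact_mod_cast hn4
  set x : ℝ := (n : ℝ) with hxdef
  have h1 : 0 < x ^ 3 - x ^ 2 := by nlinarith
  have h2 : 0 < 2 * x * (x + 1) ^ 2 := by nlinarith
  set D : ℝ := 64 * (x ^ 6 + 6 * x ^ 5 + 15 * x ^ 4 + 26 * x ^ 3 + 25 * x ^ 2 + 8 * x)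
    with hD
  have hDnn : 0 ≤ D := by positivity
  rw [ge_iff_le, div_le_div_iff₀ h2 h1]
  have hE : 0 ≤ 8 * x * (x ^ 5 + 2 * x ^ 4 + x ^ 2 + 8 * x + 4) := by
    nlinarith
  have hsq : Real.sqrt D * (x ^ 3 - x ^ 2)
      ≤ 8 * x * (x ^ 5 + 2 * x ^ 4 + x ^ 2 + 8 * x + 4) := by
    have h3 : Real.sqrt D * (x ^ 3 - x ^ 2) = Real.sqrt (D * (x ^ 3 - x ^ 2) ^ 2) := by
      rw [Real.sqrt_mul hDnn, Real.sqrt_sq h1.le]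
    rw [h3]
    rw [show (8 : ℝ) * x * (x ^ 5 + 2 * x ^ 4 + x ^ 2 + 8 * x + 4)
        = Real.sqrt ((8 * x * (x ^ 5 + 2 * x ^ 4 + x ^ 2 + 8 * x + 4)) ^ 2)
        from (Real.sqrt_sq hE).symm]
    apply Real.sqrt_le_sqrt
    have hy : (0 : ℝ) ≤ x - 4 := by linarith
    nlinarith [pow_nonneg hy 2, pow_nonneg hy 3, pow_nonneg hy 4, pow_nonneg hy 5,
      pow_nonneg hy 6, pow_nonneg hy 7, pow_nonneg hy 8, pow_nonneg hy 9, pow_nonneg hy 10]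
  nlinarith [hsq]
end

section
/- For every integer $n > 3$, the Fennessey-Larcombe-French sequence satisfies $\dfrac{V_n}{V_{n-1}} \geq \dfrac{8n(3n^2+5n+1) + \sqrt{64(n^6 + 6n^5 + 15n^4 + 26n^3 + 25n^2 + 8n)}}{2n(n+1)^2}$; that is, $V_n/V_{n-1} \geq \big(-b(n) + \sqrt{b(n)^2 - 4a(n)c(n)}\big)/(2a(n))$ where $a(n) = n(n+1)^2$, $b(n) = -8n(3n^2+5n+1)$, and $c(n) = 128(n-1)(n+1)^2$. -/
/-!
The bound is the larger root of the characteristic quadratic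
`n(n+1)² t² - 8n(3n²+5n+1) t + 128(n-1)(n+1)²` of the recurrence at index `n`.
A stronger, self-propagating bound holds: `V (n+1) / V n ≥ 16 ((n+1)³ + 1) / (n+1)³`
for all `n ≥ 1` (with equality at `n = 1`), since inserting it into the recurrence
reproduces it at the next index. The quadratic is positive at `t = 16 (x³+1) / x³` for
every `x > 0`, and that point lies right of the vertex, so it dominates the larger root.
-/

theorem add_sqrt_discrim_div_le {a β c t : ℝ} (ha : 0 < a) (hvertex : β ≤ 2 * a * t)
    (hvalue : 0 ≤ a * t ^ 2 - β * t + c) :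
    (β + √(β ^ 2 - 4 * a * c)) / (2 * a) ≤ t := by
  have hsqrt : √(β ^ 2 - 4 * a * c) ≤ 2 * a * t - β :=
    Real.sqrt_le_iff.2 ⟨by linarith, by nlinarith⟩
  rw [div_le_iff₀ (by positivity)]
  linarith

theorem flf_root_le {x : ℝ} (hx : 0 < x) :
    (8 * x * (3 * x ^ 2 + 5 * x + 1) +
        √(64 * (x ^ 6 + 6 * x ^ 5 + 15 * x ^ 4 + 26 * x ^ 3 + 25 * x ^ 2 + 8 * x))) /
      (2 * x * (x + 1) ^ 2) ≤ 16 * (x ^ 3 + 1) / x ^ 3 := by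
  have hdiscrim : 64 * (x ^ 6 + 6 * x ^ 5 + 15 * x ^ 4 + 26 * x ^ 3 + 25 * x ^ 2 + 8 * x) =
      (8 * x * (3 * x ^ 2 + 5 * x + 1)) ^ 2 -
        4 * (x * (x + 1) ^ 2) * (128 * (x - 1) * (x + 1) ^ 2) := by
    ring
  rw [hdiscrim, show 2 * x * (x + 1) ^ 2 = 2 * (x * (x + 1) ^ 2) by ring]
  apply add_sqrt_discrim_div_le (by positivity)
  · have hvertex : 2 * (x * (x + 1) ^ 2) * (16 * (x ^ 3 + 1) / x ^ 3) -
          8 * x * (3 * x ^ 2 + 5 * x + 1) =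
        (8 * x ^ 6 + 24 * x ^ 5 + 24 * x ^ 4 + 32 * x ^ 3 + 64 * x ^ 2 + 32 * x) / x ^ 3 := by
      field_simp
      ring
    have : 0 ≤
        (8 * x ^ 6 + 24 * x ^ 5 + 24 * x ^ 4 + 32 * x ^ 3 + 64 * x ^ 2 + 32 * x) / x ^ 3 := by
      positivity
    linarith
  · have hquadratic : x * (x + 1) ^ 2 * (16 * (x ^ 3 + 1) / x ^ 3) ^ 2 -
          8 * x * (3 * x ^ 2 + 5 * x + 1) * (16 * (x ^ 3 + 1) / x ^ 3) +
          128 * (x - 1) * (x + 1) ^ 2 =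
        (384 * x ^ 4 + 384 * x ^ 3 + 256 * x ^ 2 + 512 * x + 256) / x ^ 5 := by
      field_simp
      ring
    rw [hquadratic]
    positivity

theorem flf_step {K : Type*} [Field K] [LinearOrder K] [IsStrictOrderedRing K] {q a b c : K}
    (hq : 1 ≤ q)
    (hrec : q * (q + 1) ^ 2 * c =
      8 * q * (3 * q ^ 2 + 5 * q + 1) * b - 128 * (q - 1) * (q + 1) ^ 2 * a)
    (ha : 0 < a) (hab : 16 * (q ^ 3 + 1) * a ≤ q ^ 3 * b) :
    0 < b ∧ 16 * ((q + 1) ^ 3 + 1) * b ≤ (q + 1) ^ 3 * c := by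
  have hq0 : 0 < q := by linarith
  have hb : 0 < b := pos_of_mul_pos_right (lt_of_lt_of_le (by positivity) hab) (by positivity)
  have hid : q * (q ^ 3 + 1) * ((q + 1) ^ 3 * c - 16 * ((q + 1) ^ 3 + 1) * b) =
      8 * (q - 1) * (q + 1) ^ 3 * (q ^ 3 * b - 16 * (q ^ 3 + 1) * a) +
        24 * q * (q ^ 2 - 1) * b := by
    linear_combination (q + 1) * (q ^ 3 + 1) * hrec
  have hrhs : 0 ≤ 8 * (q - 1) * (q + 1) ^ 3 * (q ^ 3 * b - 16 * (q ^ 3 + 1) * a) +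
      24 * q * (q ^ 2 - 1) * b := by
    have hq1 : 0 ≤ q - 1 := by linarith
    have hq2 : 0 ≤ q ^ 2 - 1 := by nlinarith
    have hab' : 0 ≤ q ^ 3 * b - 16 * (q ^ 3 + 1) * a := by linarith
    positivity
  refine ⟨hb, ?_⟩
  rw [← hid] at hrhs
  linarith [(mul_nonneg_iff_of_pos_left (by positivity : 0 < q * (q ^ 3 + 1))).1 hrhs]

theorem flf_growth (V : ℕ → ℚ) (hV1 : V 1 = 8)
    (hrec : ∀ n : ℕ, 1 ≤ n →
      (n : ℚ) * (n + 1) ^ 2 * V (n + 1) =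
        8 * n * (3 * n ^ 2 + 5 * n + 1) * V n
          - 128 * ((n : ℚ) - 1) * (n + 1) ^ 2 * V (n - 1)) :
    ∀ n : ℕ, 1 ≤ n →
      0 < V n ∧ 16 * (((n : ℚ) + 1) ^ 3 + 1) * V n ≤ ((n : ℚ) + 1) ^ 3 * V (n + 1) := by
  intro n hn
  induction n, hn using Nat.le_induction with
  | base =>
    have hV2 := hrec 1 le_rfl
    norm_num [hV1] at hV2 ⊢
    linarith
  | succ n hn ih =>
    have hrec' := hrec (n + 1) (by omega)
    push_cast at hrec' ⊢
    exact flf_step (by norm_cast; omega) hrec' ih.1 ih.2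

theorem flf_ratio_ge (V : ℕ → ℚ) (hV1 : V 1 = 8)
    (hrec : ∀ n : ℕ, 1 ≤ n →
      (n : ℚ) * (n + 1) ^ 2 * V (n + 1) =
        8 * n * (3 * n ^ 2 + 5 * n + 1) * V n
          - 128 * ((n : ℚ) - 1) * (n + 1) ^ 2 * V (n - 1))
    (n : ℕ) (hn : 2 ≤ n) :
    16 * ((n : ℝ) ^ 3 + 1) / (n : ℝ) ^ 3 ≤ (V n : ℝ) / (V (n - 1) : ℝ) := by
  obtain ⟨m, rfl⟩ : ∃ m, n = m + 1 := ⟨n - 1, by omega⟩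
  obtain ⟨hpos, hle⟩ := flf_growth V hV1 hrec m (by omega)
  have hleR :
      16 * (((m : ℝ) + 1) ^ 3 + 1) * (V m : ℝ) ≤ ((m : ℝ) + 1) ^ 3 * (V (m + 1) : ℝ) := by
    exact_mod_cast hle
  rw [Nat.add_sub_cancel, div_le_div_iff₀ (by positivity) (by exact_mod_cast hpos)]
  push_cast
  linarith

theorem stmt_8_general (V : ℕ → ℚ) (hV1 : V 1 = 8)
    (hrec : ∀ n : ℕ, 1 ≤ n →
      (n : ℚ) * (n + 1) ^ 2 * V (n + 1) =
        8 * n * (3 * n ^ 2 + 5 * n + 1) * V n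
          - 128 * ((n : ℚ) - 1) * (n + 1) ^ 2 * V (n - 1)) :
    ∀ n : ℕ, 3 < n →
      ((V n : ℝ)) / ((V (n - 1) : ℝ)) ≥
        (8 * (n : ℝ) * (3 * (n : ℝ) ^ 2 + 5 * (n : ℝ) + 1) +
            Real.sqrt (64 * ((n : ℝ) ^ 6 + 6 * (n : ℝ) ^ 5 + 15 * (n : ℝ) ^ 4
              + 26 * (n : ℝ) ^ 3 + 25 * (n : ℝ) ^ 2 + 8 * (n : ℝ)))) /
          (2 * (n : ℝ) * ((n : ℝ) + 1) ^ 2) := by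
  intro n hn
  exact (flf_root_le (by positivity)).trans (flf_ratio_ge V hV1 hrec n (by omega))

/-- For every integer `n > 3`, `V_n / V_{n-1} ≥ (-b(n) + √(b(n)² - 4a(n)c(n)))/(2a(n))`
for the Fennessey-Larcombe-French sequence. -/
theorem stmt_8 (V : ℕ → ℚ) (hV0 : V 0 = 1) (hV1 : V 1 = 8)
    (hrec : ∀ n : ℕ, 1 ≤ n →
      (n : ℚ) * (n + 1) ^ 2 * V (n + 1) =
        8 * n * (3 * n ^ 2 + 5 * n + 1) * V n
          - 128 * ((n : ℚ) - 1) * (n + 1) ^ 2 * V (n - 1)) :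
    ∀ n : ℕ, 3 < n →
      ((V n : ℝ)) / ((V (n - 1) : ℝ)) ≥
        (8 * (n : ℝ) * (3 * (n : ℝ) ^ 2 + 5 * (n : ℝ) + 1) +
            Real.sqrt (64 * ((n : ℝ) ^ 6 + 6 * (n : ℝ) ^ 5 + 15 * (n : ℝ) ^ 4
              + 26 * (n : ℝ) ^ 3 + 25 * (n : ℝ) ^ 2 + 8 * (n : ℝ)))) /
          (2 * (n : ℝ) * ((n : ℝ) + 1) ^ 2) :=
  stmt_8_general V hV1 hrec
end

section
/- The sequence $\{n V_n\}_{n \geq 1}$ is log-concave: $(n V_n)^2 \geq (n-1) V_{n-1} \cdot (n+1) V_{n+1}$ for all $n \geq 2$. -/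
/-- Auxiliary: with `a n = n * V n`, we have `a n > 0` and
`(n+1) * a (n+1) ≥ 16 * (n+2) * a n` for all `n ≥ 1`. -/
theorem stmt_9_aux (V : ℕ → ℚ) (hV0 : V 0 = 1) (hV1 : V 1 = 8)
    (hrec : ∀ n : ℕ, 1 ≤ n →
      (n : ℚ) * (n + 1) ^ 2 * V (n + 1) =
        8 * n * (3 * n ^ 2 + 5 * n + 1) * V n
          - 128 * ((n : ℚ) - 1) * (n + 1) ^ 2 * V (n - 1)) :
    ∀ n : ℕ, 1 ≤ n → 0 < (n : ℚ) * V n ∧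
      ((n : ℚ) + 1) * (((n : ℚ) + 1) * V (n + 1)) ≥ 16 * ((n : ℚ) + 2) * ((n : ℚ) * V n) := by
  intro n hn
  induction n, hn using Nat.le_induction with
  | base =>
      have h1 := hrec 1 le_rfl
      simp only [hV0, hV1] at h1
      have hV2 : V 2 = 144 := by norm_num at h1; linarith
      norm_num [hV1, hV2]
  | succ n hn ih =>
      obtain ⟨h1, h2⟩ := ih
      have hc : (1 : ℚ) ≤ (n : ℚ) := by exact_mod_cast hn
      set c : ℚ := (n : ℚ) with hcdef
      have hr := hrec (n + 1) (by omega)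
      simp only [Nat.add_sub_cancel] at hr
      push_cast at hr ⊢
      -- positivity of a_{n+1}
      have hpos : 0 < (c + 1) * V (n + 1) := by nlinarith
      constructor
      · exact hpos
      · -- goal: (c+2) * ((c+2) * V (n+2)) ≥ 16 * (c+3) * ((c+1) * V (n+1))
        -- from hr: (c+1)*(c+2)^2*V(n+2) = 8*(c+1)*(3(c+1)^2+5(c+1)+1)*V(n+1)
        --                                  - 128*c*(c+2)^2*V n
        nlinarith [mul_pos hpos (show (0:ℚ) < c + 1 by linarith),
          mul_le_mul_of_nonneg_left h2 (show (0:ℚ) ≤ 8 * (c + 1) * (c + 2) by nlinarith),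
          mul_pos hpos (show (0:ℚ) < (c+1)*(c+2) by nlinarith)]

/-- The sequence `{n V_n}` is log-concave: `(n V_n)² ≥ (n-1)V_{n-1} · (n+1)V_{n+1}`
for all `n ≥ 2`. -/
theorem stmt_9 (V : ℕ → ℚ) (hV0 : V 0 = 1) (hV1 : V 1 = 8)
    (hrec : ∀ n : ℕ, 1 ≤ n →
      (n : ℚ) * (n + 1) ^ 2 * V (n + 1) =
        8 * n * (3 * n ^ 2 + 5 * n + 1) * V n
          - 128 * ((n : ℚ) - 1) * (n + 1) ^ 2 * V (n - 1)) :
    ∀ n : ℕ, 2 ≤ n →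
      ((n : ℚ) * V n) ^ 2 ≥ (((n : ℚ) - 1) * V (n - 1)) * (((n : ℚ) + 1) * V (n + 1)) := by
  intro n hn
  obtain ⟨m, rfl⟩ : ∃ m, n = m + 1 := ⟨n - 1, by omega⟩
  have hm : 1 ≤ m := by omega
  obtain ⟨h1, h2⟩ := stmt_9_aux V hV0 hV1 hrec m hm
  have hc : (1 : ℚ) ≤ (m : ℚ) := by exact_mod_cast hm
  set c : ℚ := (m : ℚ) with hcdef
  have hr := hrec (m + 1) (by omega)
  simp only [Nat.add_sub_cancel] at hr
  push_cast at hr ⊢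
  simp only [add_sub_cancel_right]
  have hU : 0 ≤ (c + 1) * ((c + 1) * V (m + 1)) - 16 * (c + 2) * (c * V m) := by linarith
  have key : c * (c + 1) ^ 3 * (c + 2) *
        (((c + 1) * V (m + 1)) ^ 2 - (c * V m) * ((c + 2) * V (m + 1 + 1))) =
      c * (c + 1) * (c + 2) *
          ((c + 1) * ((c + 1) * V (m + 1)) - 16 * (c + 2) * (c * V m)) ^ 2 +
        8 * c * (c + 1) * (c ^ 2 + 5 * c + 7) * (c * V m) *
          ((c + 1) * ((c + 1) * V (m + 1)) - 16 * (c + 2) * (c * V m)) +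
        128 * c * (c + 1) * (c + 2) * (c * V m) ^ 2 := by
    linear_combination (-(c * (c + 1) ^ 2 * (c * V m))) * hr
  have hcpos : (0:ℚ) < c := by linarith
  have t1 : (0:ℚ) ≤ c * (c + 1) * (c + 2) *
      ((c + 1) * ((c + 1) * V (m + 1)) - 16 * (c + 2) * (c * V m)) ^ 2 := by
    have : (0:ℚ) < c * (c + 1) * (c + 2) := by positivity
    exact mul_nonneg this.le (sq_nonneg _)
  have t2 : (0:ℚ) ≤ 8 * c * (c + 1) * (c ^ 2 + 5 * c + 7) * (c * V m) *
      ((c + 1) * ((c + 1) * V (m + 1)) - 16 * (c + 2) * (c * V m)) := by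
    have h7 : (0:ℚ) ≤ c ^ 2 + 5 * c + 7 := by nlinarith
    have : (0:ℚ) ≤ 8 * c * (c + 1) * (c ^ 2 + 5 * c + 7) * (c * V m) := by
      have : (0:ℚ) ≤ 8 * c * (c + 1) := by positivity
      nlinarith [mul_nonneg (mul_nonneg this h7) h1.le]
    exact mul_nonneg this hU
  have t3 : (0:ℚ) ≤ 128 * c * (c + 1) * (c + 2) * (c * V m) ^ 2 := by positivity
  have hfac : (0:ℚ) < c * (c + 1) ^ 3 * (c + 2) := by positivity
  have h0 : (0:ℚ) ≤ c * (c + 1) ^ 3 * (c + 2) *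
      (((c + 1) * V (m + 1)) ^ 2 - (c * V m) * ((c + 2) * V (m + 1 + 1))) := by
    rw [key]; linarith
  have hdiff : 0 ≤ ((c + 1) * V (m + 1)) ^ 2 - (c * V m) * ((c + 2) * V (m + 1 + 1)) :=
    nonneg_of_mul_nonneg_right h0 hfac
  nlinarith [hdiff]
end

section
/- The sequence $\{V_n / (n-1)!\}_{n \geq 1}$ is log-concave: $\big(V_n/(n-1)!\big)^2 \geq \big(V_{n-1}/(n-2)!\big)\big(V_{n+1}/n!\big)$ for all $n \geq 2$; equivalently, $n\, V_n^2 \geq (n-1)\, V_{n-1} V_{n+1}$ for all $n \geq 2$. -/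
set_option maxHeartbeats 800000


/-- The sequence `{V_n / (n-1)!}` is log-concave:
`(V_n/(n-1)!)² ≥ (V_{n-1}/(n-2)!)(V_{n+1}/n!)` for `n ≥ 2`; equivalently,
`n V_n² ≥ (n-1) V_{n-1} V_{n+1}` for `n ≥ 2`. -/
theorem stmt_10 (V : ℕ → ℚ) (hV0 : V 0 = 1) (hV1 : V 1 = 8)
    (hrec : ∀ n : ℕ, 1 ≤ n →
      (n : ℚ) * (n + 1) ^ 2 * V (n + 1) =
        8 * n * (3 * n ^ 2 + 5 * n + 1) * V n
          - 128 * ((n : ℚ) - 1) * (n + 1) ^ 2 * V (n - 1)) :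
    ∀ n : ℕ, 2 ≤ n →
      (V n / (Nat.factorial (n - 1) : ℚ)) ^ 2 ≥
        (V (n - 1) / (Nat.factorial (n - 2) : ℚ)) * (V (n + 1) / (Nat.factorial n : ℚ)) ∧
      (n : ℚ) * V n ^ 2 ≥ ((n : ℚ) - 1) * V (n - 1) * V (n + 1) := by
  have h2 : V 2 = 144 := by
    have h := hrec 1 le_rfl
    norm_num [hV0, hV1] at h
    linarith
  -- key positivity / ratio lemma : V (k+1) > 0 and 16 * V (k+1) ≤ V (k+2)
  have key : ∀ k : ℕ, 0 < V (k + 1) ∧ 16 * V (k + 1) ≤ V (k + 2) := by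
    intro k
    induction k with
    | zero => exact ⟨by rw [hV1]; norm_num, by rw [hV1, h2]; norm_num⟩
    | succ m ih =>
      obtain ⟨hp, hr⟩ := ih
      have hp2 : 0 < V (m + 2) := by linarith
      refine ⟨hp2, ?_⟩
      have h := hrec (m + 2) (by omega)
      simp only [show m + 2 + 1 = m + 3 from rfl, show m + 2 - 1 = m + 1 from rfl] at h
      push_cast at h
      have step : ((m : ℚ) + 2) * ((m : ℚ) + 3) ^ 2 * (V (m + 3) - 16 * V (m + 2))
          = 8 * ((m : ℚ) + 2) * (((m : ℚ) + 2) ^ 2 + ((m : ℚ) + 2) - 1)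
              * (V (m + 2) - 16 * V (m + 1)) + 128 * V (m + 1) := by
        linear_combination h
      have hm0 : (0 : ℚ) ≤ (m : ℚ) := by positivity
      have hd : 0 ≤ V (m + 2) - 16 * V (m + 1) := by linarith
      have c : (0 : ℚ) ≤ 8 * ((m : ℚ) + 2) * (((m : ℚ) + 2) ^ 2 + ((m : ℚ) + 2) - 1) := by
        nlinarith [sq_nonneg ((m : ℚ))]
      have t1 := mul_nonneg c hd
      have h1 : 0 ≤ ((m : ℚ) + 2) * ((m : ℚ) + 3) ^ 2 * (V (m + 3) - 16 * V (m + 2)) := by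
        rw [step]; linarith
      have hmpos : (0 : ℚ) < ((m : ℚ) + 2) * ((m : ℚ) + 3) ^ 2 := by positivity
      by_contra hc
      push_neg at hc
      have hneg : V (m + 3) - 16 * V (m + 2) < 0 := by linarith
      exact absurd h1 (not_le.mpr (mul_neg_of_pos_of_neg hmpos hneg))
  intro n hn
  obtain ⟨m, rfl⟩ : ∃ m, n = m + 2 := ⟨n - 2, by omega⟩
  obtain ⟨hp1, hr1⟩ := key m
  obtain ⟨hp2, hr2⟩ := key (m + 1)
  have hp3 : 0 < V (m + 3) := by
    have := (key (m + 1)).2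
    simp only [show m + 1 + 1 = m + 2 from rfl, show m + 1 + 2 = m + 3 from rfl] at this ⊢
    linarith
  have h := hrec (m + 2) (by omega)
  simp only [show m + 2 + 1 = m + 3 from rfl, show m + 2 - 1 = m + 1 from rfl] at h
  push_cast at h
  set q : ℚ := (m : ℚ) with hq
  have hm0 : (0 : ℚ) ≤ q := by rw [hq]; positivity
  -- main polynomial identity
  have hid : (q + 2) * (q + 3) ^ 2 * ((q + 2) * V (m + 2) ^ 2 - (q + 1) * V (m + 1) * V (m + 3))
      = (V (m + 2) - 16 * V (m + 1)) *
          ((q + 2) ^ 2 * (q + 3) ^ 2 * V (m + 2)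
            + (16 * (q + 2) ^ 2 * (q + 3) ^ 2
                - 8 * (q + 2) * (q + 1) * (3 * (q + 2) ^ 2 + 5 * (q + 2) + 1)) * V (m + 1))
        + (256 * (q + 2) ^ 3 + 512 * (q + 2) ^ 2 + 128 * (q + 2) + 128) * V (m + 1) ^ 2 := by
    linear_combination (-(q + 1) * V (m + 1)) * h
  have hd : 0 ≤ V (m + 2) - 16 * V (m + 1) := by linarith
  -- the bracket is nonnegative
  have c1 : (0 : ℚ) ≤ (q + 2) ^ 2 * (q + 3) ^ 2 := by positivity
  have c2 : (0 : ℚ) ≤ 32 * ((q + 2) ^ 2 * (q + 3) ^ 2)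
      - 8 * (q + 2) * (q + 1) * (3 * (q + 2) ^ 2 + 5 * (q + 2) + 1) := by
    nlinarith [sq_nonneg q, mul_nonneg hm0 hm0, mul_nonneg (mul_nonneg hm0 hm0) hm0,
      mul_nonneg (mul_nonneg (mul_nonneg hm0 hm0) hm0) hm0]
  have t1 := mul_nonneg c1 hd
  have t2 := mul_nonneg c2 hp1.le
  have hb : 0 ≤ (q + 2) ^ 2 * (q + 3) ^ 2 * V (m + 2)
      + (16 * (q + 2) ^ 2 * (q + 3) ^ 2
          - 8 * (q + 2) * (q + 1) * (3 * (q + 2) ^ 2 + 5 * (q + 2) + 1)) * V (m + 1) := by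
    linarith [t1, t2]
  have t3 := mul_nonneg hd hb
  have cq : (0 : ℚ) ≤ 256 * (q + 2) ^ 3 + 512 * (q + 2) ^ 2 + 128 * (q + 2) + 128 := by positivity
  have t4 := mul_nonneg cq (sq_nonneg (V (m + 1)))
  have h1 : 0 ≤ (q + 2) * (q + 3) ^ 2 *
      ((q + 2) * V (m + 2) ^ 2 - (q + 1) * V (m + 1) * V (m + 3)) := by
    rw [hid]; linarith [t3, t4]
  have hmpos : (0 : ℚ) < (q + 2) * (q + 3) ^ 2 := by positivity
  have hmain : (q + 1) * V (m + 1) * V (m + 3) ≤ (q + 2) * V (m + 2) ^ 2 := by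
    by_contra hc
    push_neg at hc
    have hneg : (q + 2) * V (m + 2) ^ 2 - (q + 1) * V (m + 1) * V (m + 3) < 0 := by linarith
    exact absurd h1 (not_le.mpr (mul_neg_of_pos_of_neg hmpos hneg))
  constructor
  · -- factorial version
    simp only [show m + 2 - 1 = m + 1 from rfl, show m + 2 - 2 = m from rfl]
    have hF : (0 : ℚ) < (Nat.factorial m : ℚ) := by
      exact_mod_cast Nat.factorial_pos m
    have e1 : ((Nat.factorial (m + 1) : ℚ)) = (q + 1) * (Nat.factorial m : ℚ) := by
      rw [Nat.factorial_succ]; push_cast; ring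
    have e2 : ((Nat.factorial (m + 2) : ℚ)) = (q + 2) * (q + 1) * (Nat.factorial m : ℚ) := by
      rw [Nat.factorial_succ, Nat.factorial_succ]; push_cast; ring
    rw [ge_iff_le, e1, e2, div_pow, div_mul_div_comm, div_le_div_iff₀ (by positivity) (by positivity)]
    have cmul : (0 : ℚ) ≤ (q + 1) * (Nat.factorial m : ℚ) ^ 2 := by positivity
    have := mul_le_mul_of_nonneg_left hmain cmul
    linarith [this]
  · simp only [show m + 2 - 1 = m + 1 from rfl, show m + 2 + 1 = m + 3 from rfl]
    push_cast
    simp only [hq] at hmain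
    linarith [hmain]
end

section
/- The sequence $\{\sqrt[n]{V_{n+1}}\}_{n \geq 1}$ is strictly decreasing; that is, for every $n \geq 1$, $V_{n+2}^{\,1/(n+1)} < V_{n+1}^{\,1/n}$, or equivalently $V_{n+2}^{\,n} < V_{n+1}^{\,n+1}$. -/
set_option maxHeartbeats 1000000 in
/-- The sequence `{V_{n+1}^{1/n}}_{n ≥ 1}` is strictly decreasing. -/
theorem stmt_11 (V : ℕ → ℚ) (hV0 : V 0 = 1) (hV1 : V 1 = 8)
    (hrec : ∀ n : ℕ, 1 ≤ n →
      (n : ℚ) * (n + 1) ^ 2 * V (n + 1) =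
        8 * n * (3 * n ^ 2 + 5 * n + 1) * V n
          - 128 * ((n : ℚ) - 1) * (n + 1) ^ 2 * V (n - 1)) :
    ∀ n : ℕ, 1 ≤ n →
      ((V (n + 2) : ℝ)) ^ ((1 : ℝ) / ((n : ℝ) + 1)) < ((V (n + 1) : ℝ)) ^ ((1 : ℝ) / (n : ℝ)) := by
  -- explicit small values
  have h1 := hrec 1 le_rfl
  have h2 := hrec 2 (by norm_num)
  norm_num [hV0, hV1] at h1
  have hV2 : V 2 = 144 := by linarith
  norm_num [hV1, hV2] at h2
  have hV3 : V 3 = 2432 := by linarith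
  -- key invariant: positivity and ratio lower bound
  have key : ∀ n : ℕ, 2 ≤ n → 0 < V n ∧
      16 * ((n : ℚ) * ((n : ℚ) + 1) ^ 2 + 1) * V n ≤ (n : ℚ) * ((n : ℚ) + 1) ^ 2 * V (n + 1) := by
    intro n hn
    induction n, hn using Nat.le_induction with
    | base =>
      constructor
      · rw [hV2]; norm_num
      · show (16 : ℚ) * ((2:ℚ) * ((2:ℚ)+1)^2 + 1) * V 2 ≤ (2:ℚ) * ((2:ℚ)+1)^2 * V 3
        rw [hV2, hV3]; norm_num
    | succ n hn ih =>
      obtain ⟨hpos, hF⟩ := ih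
      have hx : (2 : ℚ) ≤ (n : ℚ) := by exact_mod_cast hn
      have hE := hrec (n + 1) (by omega)
      simp only [Nat.add_sub_cancel] at hE
      push_cast at hE
      have hK : (0 : ℚ) < (n:ℚ) * ((n:ℚ)+1)^2 + 1 := by nlinarith
      have hM : (0 : ℚ) < (n:ℚ) * ((n:ℚ)+1)^2 := by nlinarith
      have h5 : 0 < (n:ℚ) * ((n:ℚ)+1)^2 * V (n+1) :=
        lt_of_lt_of_le (by nlinarith [mul_pos hK hpos]) hF
      have hpos1 : 0 < V (n + 1) := by nlinarith [h5, hM]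
      refine ⟨by push_cast; exact hpos1, ?_⟩
      push_cast
      have hFnn : 0 ≤ (n:ℚ) * ((n:ℚ)+1)^2 * V (n+1) - 16 * ((n:ℚ) * ((n:ℚ)+1)^2 + 1) * V n := by
        linarith
      have hP1 : (0:ℚ) ≤ 256*((n:ℚ)+1)^2 - 128*((n:ℚ)+1) - 256 := by nlinarith
      have hB : (0:ℚ) ≤ 128 * (n:ℚ) * ((n:ℚ)+2)^2 := by positivity
      have hid : 16 * ((n:ℚ) * ((n:ℚ)+1)^2 + 1) *
          (((n:ℚ)+1) * (((n:ℚ)+1)+1)^2 * V (n+2)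
            - 16 * (((n:ℚ)+1) * (((n:ℚ)+1)+1)^2 + 1) * V (n+1))
          = (256*((n:ℚ)+1)^2 - 128*((n:ℚ)+1) - 256) * V (n+1)
            + (128 * (n:ℚ) * ((n:ℚ)+2)^2) *
              ((n:ℚ) * ((n:ℚ)+1)^2 * V (n+1) - 16 * ((n:ℚ) * ((n:ℚ)+1)^2 + 1) * V n) := by
        linear_combination (16 * ((n:ℚ) * ((n:ℚ)+1)^2 + 1)) * hE
      nlinarith [hid, add_nonneg (mul_nonneg hP1 hpos1.le) (mul_nonneg hB hFnn), hK]
  -- log-concavity from index 2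
  have lc : ∀ n : ℕ, 2 ≤ n → V (n + 2) * V n ≤ V (n + 1) ^ 2 := by
    intro n hn
    obtain ⟨hpos, hF⟩ := key n hn
    have hx : (2 : ℚ) ≤ (n : ℚ) := by exact_mod_cast hn
    have hE := hrec (n + 1) (by omega)
    simp only [Nat.add_sub_cancel] at hE
    push_cast at hE
    have hz : (0:ℚ) ≤ (n:ℚ) - 2 := by linarith
    have hFnn : 0 ≤ (n:ℚ) * ((n:ℚ)+1)^2 * V (n+1) - 16 * ((n:ℚ) * ((n:ℚ)+1)^2 + 1) * V n := by
      linarith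
    have hid2 : ((n:ℚ) * ((n:ℚ)+1)^2)^2 * (((n:ℚ)+1) * ((n:ℚ)+2)^2)
          * (V (n+1)^2 - V (n+2) * V n)
        = (((n:ℚ)+1) * ((n:ℚ)+2)^2)
            * ((n:ℚ) * ((n:ℚ)+1)^2 * V (n+1) - 16 * ((n:ℚ) * ((n:ℚ)+1)^2 + 1) * V n)^2
          + (8*(n:ℚ)^6 + 64*(n:ℚ)^5 + 176*(n:ℚ)^4 + 208*(n:ℚ)^3 + 160*(n:ℚ)^2 + 192*(n:ℚ) + 56
                - (8*(n:ℚ)^6 + 64*(n:ℚ)^5 + 176*(n:ℚ)^4 + 208*(n:ℚ)^3 + 160*(n:ℚ)^2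
                  + 192*(n:ℚ) + 56)
              + (32*(((n:ℚ)+1) * ((n:ℚ)+2)^2)*((n:ℚ) * ((n:ℚ)+1)^2 + 1)
                - ((n:ℚ) * ((n:ℚ)+1)^2) * (8*((n:ℚ)+1)*(3*((n:ℚ)+1)^2+5*((n:ℚ)+1)+1))))
            * (((n:ℚ) * ((n:ℚ)+1)^2 * V (n+1)
                - 16 * ((n:ℚ) * ((n:ℚ)+1)^2 + 1) * V n) * V n)
          + (((n:ℚ) * ((n:ℚ)+1)^2)^2 * (128 * (n:ℚ) * ((n:ℚ)+2)^2)
              + 256*(((n:ℚ)+1) * ((n:ℚ)+2)^2)*((n:ℚ) * ((n:ℚ)+1)^2 + 1)^2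
              - 16*((n:ℚ) * ((n:ℚ)+1)^2 + 1)*((n:ℚ) * ((n:ℚ)+1)^2)
                  *(8*((n:ℚ)+1)*(3*((n:ℚ)+1)^2+5*((n:ℚ)+1)+1))) * (V n)^2 := by
      linear_combination (-((n:ℚ) * ((n:ℚ)+1)^2)^2 * V n) * hE
    have hP2 : (0:ℚ) ≤ 32*(((n:ℚ)+1) * ((n:ℚ)+2)^2)*((n:ℚ) * ((n:ℚ)+1)^2 + 1)
                - ((n:ℚ) * ((n:ℚ)+1)^2) * (8*((n:ℚ)+1)*(3*((n:ℚ)+1)^2+5*((n:ℚ)+1)+1)) := by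
      nlinarith [pow_nonneg hz 2, pow_nonneg hz 3, pow_nonneg hz 4, pow_nonneg hz 5,
        pow_nonneg hz 6, hz]
    have hP3 : (0:ℚ) ≤ ((n:ℚ) * ((n:ℚ)+1)^2)^2 * (128 * (n:ℚ) * ((n:ℚ)+2)^2)
              + 256*(((n:ℚ)+1) * ((n:ℚ)+2)^2)*((n:ℚ) * ((n:ℚ)+1)^2 + 1)^2
              - 16*((n:ℚ) * ((n:ℚ)+1)^2 + 1)*((n:ℚ) * ((n:ℚ)+1)^2)
                  *(8*((n:ℚ)+1)*(3*((n:ℚ)+1)^2+5*((n:ℚ)+1)+1)) := by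
      nlinarith [pow_nonneg hz 2, pow_nonneg hz 3, pow_nonneg hz 4, pow_nonneg hz 5,
        pow_nonneg hz 6, hz]
    have hx1 : (0:ℚ) < (n:ℚ) + 1 := by linarith
    have hx0 : (0:ℚ) < (n:ℚ) := by linarith
    have hMN : (0:ℚ) < ((n:ℚ) * ((n:ℚ)+1)^2)^2 * (((n:ℚ)+1) * ((n:ℚ)+2)^2) := by positivity
    have hNn : (0:ℚ) ≤ ((n:ℚ)+1) * ((n:ℚ)+2)^2 := by positivity
    nlinarith [hid2, hMN,
      mul_nonneg hNn (sq_nonneg ((n:ℚ) * ((n:ℚ)+1)^2 * V (n+1)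
        - 16 * ((n:ℚ) * ((n:ℚ)+1)^2 + 1) * V n)),
      mul_nonneg hP2 (mul_nonneg hFnn hpos.le), mul_nonneg hP3 (sq_nonneg (V n))]
  -- rational inequality V(n+2)^n < V(n+1)^(n+1)
  have Q : ∀ n : ℕ, 1 ≤ n → V (n + 2) ^ n < V (n + 1) ^ (n + 1) := by
    intro n hn
    induction n, hn using Nat.le_induction with
    | base => rw [hV2, hV3]; norm_num
    | succ n hn ih =>
      have hp1 : 0 < V (n + 2) := (key (n+2) (by omega)).1
      have hp2 : 0 < V (n + 3) := (key (n+3) (by omega)).1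
      have hp0 : 0 < V (n + 1) := by
        rcases Nat.lt_or_ge n 2 with h | h
        · interval_cases n
          · rw [hV2]; norm_num
        · exact (key (n+1) (by omega)).1
      have hlc : V (n + 3) * V (n + 1) ≤ V (n + 2) ^ 2 := lc (n+1) (by omega)
      have h2' : V (n + 3) ^ (n+1) * V (n + 1) ^ (n+1) ≤ V (n + 2) ^ (2*(n+1)) := by
        calc V (n + 3) ^ (n+1) * V (n + 1) ^ (n+1) = (V (n + 3) * V (n + 1)) ^ (n + 1) := by
              rw [mul_pow]
          _ ≤ (V (n + 2) ^ 2) ^ (n + 1) := pow_le_pow_left₀ (by positivity) hlc (n+1)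
          _ = V (n + 2) ^ (2*(n+1)) := by rw [← pow_mul]
      have h3 : V (n + 3) ^ (n+1) * V (n + 2) ^ n < V (n + 3) ^ (n+1) * V (n + 1) ^ (n+1) :=
        mul_lt_mul_of_pos_left ih (by positivity)
      have h4 : V (n + 3) ^ (n+1) * V (n + 2) ^ n < V (n + 2) ^ (n + 2) * V (n + 2) ^ n := by
        calc V (n + 3) ^ (n+1) * V (n + 2) ^ n < V (n + 3) ^ (n+1) * V (n + 1) ^ (n+1) := h3
          _ ≤ V (n + 2) ^ (2*(n+1)) := h2'
          _ = V (n + 2) ^ (n + 2) * V (n + 2) ^ n := by rw [← pow_add]; ring_nf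
      have h5 := lt_of_mul_lt_mul_right h4 (by positivity : (0:ℚ) ≤ V (n+2) ^ n)
      simpa using h5
  -- transfer to real rpow
  intro n hn
  have hQ := Q n hn
  have hp1 : 0 < V (n + 1) := by
    rcases Nat.lt_or_ge n 2 with h | h
    · interval_cases n
      · rw [hV2]; norm_num
    · exact (key (n+1) (by omega)).1
  have hp2 : 0 < V (n + 2) := (key (n+2) (by omega)).1
  have ha : (0:ℝ) < ((V (n+1) : ℚ) : ℝ) := by exact_mod_cast hp1
  have hb : (0:ℝ) < ((V (n+2) : ℚ) : ℝ) := by exact_mod_cast hp2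
  have hQR : ((V (n+2) : ℚ) : ℝ) ^ n < ((V (n+1) : ℚ) : ℝ) ^ (n+1) := by exact_mod_cast hQ
  have hn' : (0:ℝ) < (n : ℝ) := by exact_mod_cast hn
  have key1 : ((((V (n+2) : ℚ) : ℝ)) ^ ((1:ℝ)/((n:ℝ)+1))) ^ (n * (n+1))
      = ((V (n+2) : ℚ) : ℝ) ^ n := by
    rw [← Real.rpow_natCast ((((V (n+2) : ℚ) : ℝ)) ^ ((1:ℝ)/((n:ℝ)+1))) (n*(n+1)),
      ← Real.rpow_mul hb.le]
    push_cast
    rw [show (1:ℝ)/((n:ℝ)+1) * ((n:ℝ) * ((n:ℝ)+1)) = (n:ℝ) by field_simp]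
    exact Real.rpow_natCast _ n
  have key2 : ((((V (n+1) : ℚ) : ℝ)) ^ ((1:ℝ)/(n:ℝ))) ^ (n * (n+1))
      = ((V (n+1) : ℚ) : ℝ) ^ (n+1) := by
    rw [← Real.rpow_natCast ((((V (n+1) : ℚ) : ℝ)) ^ ((1:ℝ)/(n:ℝ))) (n*(n+1)),
      ← Real.rpow_mul ha.le]
    push_cast
    rw [show (1:ℝ)/(n:ℝ) * ((n:ℝ) * ((n:ℝ)+1)) = (n:ℝ)+1 by field_simp]
    have h := Real.rpow_natCast (((V (n+1) : ℚ) : ℝ)) (n+1)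
    push_cast at h
    exact h
  apply lt_of_pow_lt_pow_left₀ (n * (n+1)) (Real.rpow_nonneg ha.le _)
  rw [key1, key2]
  exact hQR
end

section
/- Let $g(n) = V_n / V_{n-1}$ and $h(n) = 16(n^3 - n^2 + 1)/(n^3 - n^2)$ for $n \geq 2$. If for some integer $n \geq 4$ we have $g(n) > h(n)$, then $g(n+1) > h(n+1)$; moreover $g(3) = h(3) = 152/9$ and $g(4) = 625/38 > 49/3 = h(4)$. -/
/-!
Writing `g(n) = V n / V (n-1)`, the recurrence reads
`g(n+1) = 8(3n²+5n+1)/(n+1)² - 128(n-1)/(n g(n))`, which is increasing in `g(n)`.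
So `g(n) > h(n)` gives `g(n+1) > 8(3n²+5n+1)/(n+1)² - 128(n-1)/(n h(n))`, and this exceeds
`h(n+1)` because, after clearing denominators, the difference is a positive multiple of
`2n² - n - 2`. The recurrence also needs `V` to stay positive; this follows from the
invariant `8 V n ≤ V (n+1)`.
-/

section FLF

variable {K : Type*} [Field K] [LinearOrder K] [IsStrictOrderedRing K]

def IsFLFRecurrence (V : ℕ → K) : Prop :=
  ∀ n : ℕ, 1 ≤ n →
    (n : K) * (n + 1) ^ 2 * V (n + 1) =
      8 * n * (3 * n ^ 2 + 5 * n + 1) * V n - 128 * ((n : K) - 1) * (n + 1) ^ 2 * V (n - 1)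

def flfRatioBound (x : K) : K :=
  16 * (x ^ 3 - x ^ 2 + 1) / (x ^ 3 - x ^ 2)

theorem IsFLFRecurrence.pos_and_eight_mul_le {V : ℕ → K} (hV : IsFLFRecurrence V)
    (h0 : 0 < V 0) (h1 : 8 * V 0 ≤ V 1) (n : ℕ) : 0 < V n ∧ 8 * V n ≤ V (n + 1) := by
  induction n with
  | zero => exact ⟨h0, h1⟩
  | succ m ih =>
    obtain ⟨hpos, hgrowth⟩ := ih
    refine ⟨by linarith, ?_⟩
    have hr := hV (m + 1) (by omega)
    push_cast at hr
    set x : K := (m : K)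
    -- the recurrence at `n = m + 1`, rewritten around the invariant `8 V n ≤ V (n+1)`
    have hidentity : (x + 1) * (x + 2) ^ 2 * (V (m + 2) - 8 * V (m + 1)) =
        8 * (x + 1) ^ 2 * (2 * x + 5) * (V (m + 1) - 8 * V m)
          + 64 * (x ^ 2 + 4 * x + 5) * V m := by
      linear_combination hr
    have hrhs : 0 ≤ 8 * (x + 1) ^ 2 * (2 * x + 5) * (V (m + 1) - 8 * V m)
        + 64 * (x ^ 2 + 4 * x + 5) * V m := by
      have := sub_nonneg.mpr hgrowth
      positivity
    have hcoef : (0 : K) < (x + 1) * (x + 2) ^ 2 := by positivity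
    have := (mul_nonneg_iff_of_pos_left hcoef).mp (hidentity ▸ hrhs)
    linarith

theorem flfRatioBound_succ_lt_of_lt {x a b c : K} (hx : 2 ≤ x) (ha : 0 < a) (hb : 0 < b)
    (hrec : x * (x + 1) ^ 2 * c =
      8 * x * (3 * x ^ 2 + 5 * x + 1) * b - 128 * (x - 1) * (x + 1) ^ 2 * a)
    (h : flfRatioBound x < b / a) : flfRatioBound (x + 1) < c / b := by
  have hden : 0 < x ^ 2 * (x - 1) := by nlinarith
  rw [flfRatioBound, div_lt_div_iff₀ (by nlinarith) ha] at h
  rw [flfRatioBound, div_lt_div_iff₀ (by nlinarith) hb]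
  -- `(x³-x²+1)(x³+x²-x-2) = x²(x²-1)² + (2x²-x-2)`
  have hkey : 16 * (x - 1) * (x + 1) ^ 2 * a < (x ^ 3 + x ^ 2 - x - 2) * b := by
    have hmul := mul_lt_mul_of_pos_left h (by nlinarith : (0 : K) < x ^ 3 + x ^ 2 - x - 2)
    have hextra : 0 < (2 * x ^ 2 - x - 2) * a := mul_pos (by nlinarith) ha
    refine lt_of_mul_lt_mul_left ?_ hden.le
    nlinarith
  linear_combination 8 * hkey - hrec

theorem IsFLFRecurrence.initial_values {V : ℕ → K} (hV : IsFLFRecurrence V)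
    (h0 : V 0 = 1) (h1 : V 1 = 8) : V 2 = 144 ∧ V 3 = 2432 ∧ V 4 = 40000 := by
  have e1 := hV 1 le_rfl
  have e2 := hV 2 (by norm_num)
  have e3 := hV 3 (by norm_num)
  norm_num [h0, h1] at e1 e2 e3
  have h2 : V 2 = 144 := by linarith
  have h3 : V 3 = 2432 := by rw [h2] at e2; linarith
  have h4 : V 4 = 40000 := by rw [h2, h3] at e3; linarith
  exact ⟨h2, h3, h4⟩

end FLF

/-- Induction step and base cases for `g(n) = V_n/V_{n-1}` versus
`h(n) = 16(n³-n²+1)/(n³-n²)`: for `n ≥ 4`, `g(n) > h(n)` implies `g(n+1) > h(n+1)`;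
moreover `g(3) = h(3) = 152/9` and `g(4) = 625/38 > 49/3 = h(4)`. -/
theorem stmt_12 (V : ℕ → ℚ) (hV0 : V 0 = 1) (hV1 : V 1 = 8)
    (hrec : ∀ n : ℕ, 1 ≤ n →
      (n : ℚ) * (n + 1) ^ 2 * V (n + 1) =
        8 * n * (3 * n ^ 2 + 5 * n + 1) * V n
          - 128 * ((n : ℚ) - 1) * (n + 1) ^ 2 * V (n - 1)) :
    (∀ n : ℕ, 4 ≤ n →
      V n / V (n - 1) > 16 * ((n : ℚ) ^ 3 - (n : ℚ) ^ 2 + 1) / ((n : ℚ) ^ 3 - (n : ℚ) ^ 2) →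
      V (n + 1) / V n >
        16 * (((n : ℚ) + 1) ^ 3 - ((n : ℚ) + 1) ^ 2 + 1) / (((n : ℚ) + 1) ^ 3 - ((n : ℚ) + 1) ^ 2)) ∧
    V 3 / V 2 = 152 / 9 ∧
    16 * ((3 : ℚ) ^ 3 - (3 : ℚ) ^ 2 + 1) / ((3 : ℚ) ^ 3 - (3 : ℚ) ^ 2) = 152 / 9 ∧
    V 4 / V 3 = 625 / 38 ∧
    16 * ((4 : ℚ) ^ 3 - (4 : ℚ) ^ 2 + 1) / ((4 : ℚ) ^ 3 - (4 : ℚ) ^ 2) = 49 / 3 ∧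
    (625 : ℚ) / 38 > 49 / 3 := by
  obtain ⟨hV2, hV3, hV4⟩ := IsFLFRecurrence.initial_values hrec hV0 hV1
  have hpos (n : ℕ) : 0 < V n :=
    (IsFLFRecurrence.pos_and_eight_mul_le hrec (by norm_num [hV0]) (by norm_num [hV0, hV1]) n).1
  refine ⟨fun n hn hgt => ?_, by norm_num [hV2, hV3], by norm_num, by norm_num [hV3, hV4],
    by norm_num, by norm_num⟩
  exact flfRatioBound_succ_lt_of_lt (by exact_mod_cast hn.trans' (by norm_num : 2 ≤ 4))
    (hpos (n - 1)) (hpos n) (hrec n (by omega)) hgt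
end
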